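/- Let J ⊂ S be a quasi-stable monomial ideal with Pommaret basis P(J) = {x^{α(1)},…,x^{α(m)}} and G = {f_{α(1)},…,f_{α(m)}} a P(J)-marked basis. Let S = Σ_{l=1}^m S_l e_l (S_l ∈ S) be a syzygy of G, i.e. Σ_{l=1}^m S_l f_{α(l)} = 0. Then every S_l is a polynomial only in the multiplicative variables of x^{α(l)} if and only if S = 0. -/

import Mathlib

open MvPolynomial

namespace MB

/-- Exponent (multi-index) of a term in the variables `x_0, …, x_n`. -/
abbrev Exp (n : ℕ) := Fin (n+1) →₀ ℕ

variable {n : ℕ}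

/-- Total degree of a term. -/
def degE (α : Exp n) : ℕ := α.sum fun _ e => e

/-- `x_i` is a multiplicative variable for the term `x^α`, i.e. `x_i ≤ min(x^α)`. -/
def mult (α : Exp n) (i : Fin (n+1)) : Prop := ∀ j ∈ α.support, i ≤ j

/-- Every variable occurring in `x^δ` is multiplicative for `x^α`. -/
def multExp (α δ : Exp n) : Prop := ∀ i ∈ δ.support, mult α i

/-- Pommaret cone of a term. -/
def pommaretCone (α : Exp n) : Set (Exp n) := {γ | ∃ δ, multExp α δ ∧ γ = α + δ}

/-- A set of terms is (the set of terms of) a monomial ideal. -/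
def IsMonomialIdeal (T : Set (Exp n)) : Prop := ∀ α ∈ T, ∀ β, α + β ∈ T

/-- `P` is a Pommaret basis of the set of terms `T`: the terms of `T` are the
disjoint union of the Pommaret cones of the elements of `P`. -/
def IsPommaretBasis (P : Finset (Exp n)) (T : Set (Exp n)) : Prop :=
  (∀ γ, γ ∈ T ↔ ∃ α ∈ P, γ ∈ pommaretCone α) ∧
  ∀ γ : Exp n, ∀ α ∈ P, ∀ β ∈ P, γ ∈ pommaretCone α → γ ∈ pommaretCone β → α = β

/-- Lexicographic order on terms (with `x_n > … > x_0` significance). -/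
def lexLt (η δ : Exp n) : Prop := ∃ i, η i < δ i ∧ ∀ j, i < j → η j = δ j

/-- Terms of the saturation `(J : (x_0,…,x_n)^∞)` of a monomial ideal. -/
def satTerms (T : Set (Exp n)) : Set (Exp n) :=
  {α | ∃ j : ℕ, ∀ β : Exp n, degE β = j → α + β ∈ T}

section ModuleDefs

variable (A : Type*) [CommRing A] {κ : Type*} [Fintype κ] [DecidableEq κ]

/-- The term `x^α e_k` of the free module. -/
noncomputable def termV (α : Exp n) (k : κ) : κ → MvPolynomial (Fin (n+1)) A :=
  Pi.single k (monomial α 1)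

variable {A}

/-- Homogeneity of degree `s` in `S^m_d` (with weight vector `d`). -/
def IsHomogV (d : κ → ℤ) (f : κ → MvPolynomial (Fin (n+1)) A) (s : ℤ) : Prop :=
  ∀ k, ∀ β ∈ (f k).support, (degE β : ℤ) + d k = s

variable (A)

/-- The degree-`s` component `(S^m_d)_s` as an `A`-submodule. -/
noncomputable def homogCompV (d : κ → ℤ) (s : ℤ) :
    Submodule A (κ → MvPolynomial (Fin (n+1)) A) where
  carrier := {f | IsHomogV d f s}
  add_mem' := by
    intro f g hf hg k β hβ
    rcases Finset.mem_union.mp (MvPolynomial.support_add hβ) with h | h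
    · exact hf k β h
    · exact hg k β h
  zero_mem' := by intro k β hβ; simp at hβ
  smul_mem' := by
    intro a f hf k β hβ
    exact hf k β (MvPolynomial.support_smul hβ)

/-- The set `N(U)` of terms of `S^m_d` not belonging to the monomial module `U = ⊕ J^(k) e_k`. -/
def NUTerms (J : κ → Set (Exp n)) : Set (κ → MvPolynomial (Fin (n+1)) A) :=
  {v | ∃ k, ∃ α, α ∉ J k ∧ v = termV A α k}

/-- The degree-`s` part `N(U)_s`. -/
def NUTermsDeg (d : κ → ℤ) (J : κ → Set (Exp n)) (s : ℤ) :
    Set (κ → MvPolynomial (Fin (n+1)) A) :=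
  {v | ∃ k, ∃ α, α ∉ J k ∧ (degE α : ℤ) + d k = s ∧ v = termV A α k}

variable {A}

/-- A `P(U)`-marked set: for each `x^α e_k` with `α ∈ P k`, the element `g α k` has
head term `x^α e_k` (coefficient `1`) and all other terms in `N(U)` of the same degree. -/
def IsMarkedSetV (d : κ → ℤ) (J : κ → Set (Exp n)) (P : κ → Finset (Exp n))
    (g : Exp n → κ → (κ → MvPolynomial (Fin (n+1)) A)) : Prop :=
  ∀ k, ∀ α ∈ P k, ∀ l, ∀ β ∈ ((g α k - termV A α k) l).support,
    β ∉ J l ∧ (degE β : ℤ) + d l = (degE α : ℤ) + d k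

/-- The underlying set of elements of the marked set `G`. -/
def GSet (P : κ → Finset (Exp n)) (g : Exp n → κ → (κ → MvPolynomial (Fin (n+1)) A)) :
    Set (κ → MvPolynomial (Fin (n+1)) A) :=
  {v | ∃ k, ∃ α ∈ P k, v = g α k}

/-- The set `G^(s)` of multiplicative multiples of elements of `G` of degree `s`. -/
def GSdeg (d : κ → ℤ) (P : κ → Finset (Exp n))
    (g : Exp n → κ → (κ → MvPolynomial (Fin (n+1)) A)) (s : ℤ) :
    Set (κ → MvPolynomial (Fin (n+1)) A) :=
  {v | ∃ k, ∃ α ∈ P k, ∃ δ : Exp n, multExp α δ ∧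
    (degE δ : ℤ) + (degE α : ℤ) + d k = s ∧ v = (monomial δ (1:A)) • g α k}

/-- The `S`-submodule `⟨G⟩` generated by the marked set. -/
noncomputable def GmodS (P : κ → Finset (Exp n))
    (g : Exp n → κ → (κ → MvPolynomial (Fin (n+1)) A)) :
    Submodule (MvPolynomial (Fin (n+1)) A) (κ → MvPolynomial (Fin (n+1)) A) :=
  Submodule.span _ (GSet P g)

/-- The degree-`s` component `⟨G⟩_s` as an `A`-submodule. -/
noncomputable def GmodDeg (d : κ → ℤ) (P : κ → Finset (Exp n))
    (g : Exp n → κ → (κ → MvPolynomial (Fin (n+1)) A)) (s : ℤ) :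
    Submodule A (κ → MvPolynomial (Fin (n+1)) A) :=
  (GmodS P g).restrictScalars A ⊓ homogCompV A d s

/-- `G` is a marked basis: `(S^m_d)_s = ⟨G⟩_s ⊕ ⟨N(U)_s⟩^A` for every degree `s`. -/
def MarkedBasisProp (d : κ → ℤ) (J : κ → Set (Exp n)) (P : κ → Finset (Exp n))
    (g : Exp n → κ → (κ → MvPolynomial (Fin (n+1)) A)) : Prop :=
  ∀ s : ℤ,
    homogCompV A d s = GmodDeg d P g s ⊔ Submodule.span A (NUTermsDeg A d J s) ∧
    GmodDeg d P g s ⊓ Submodule.span A (NUTermsDeg A d J s) = ⊥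

/-- One step of the reduction relation `→_G`. -/
def RedStep (P : κ → Finset (Exp n)) (g : Exp n → κ → (κ → MvPolynomial (Fin (n+1)) A))
    (h h' : κ → MvPolynomial (Fin (n+1)) A) : Prop :=
  ∃ k, ∃ α ∈ P k, ∃ η : Exp n, multExp α η ∧
    (h k).coeff (η + α) ≠ 0 ∧
    h' = h - ((h k).coeff (η + α)) • ((monomial η (1:A)) • g α k)

end ModuleDefs

section IdealDefs

variable {A : Type*} [CommRing A]

/-- A `P(J)`-marked set of polynomials. -/
def IsMarkedSetI (T : Set (Exp n)) (P : Finset (Exp n))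
    (g : Exp n → MvPolynomial (Fin (n+1)) A) : Prop :=
  ∀ α ∈ P, ∀ β ∈ (g α - monomial α (1:A)).support, β ∉ T ∧ degE β = degE α

variable (A)

/-- The degree-`s` monomials not in `T`. -/
def NTermsDegI (T : Set (Exp n)) (s : ℕ) : Set (MvPolynomial (Fin (n+1)) A) :=
  {p | ∃ β, β ∉ T ∧ degE β = s ∧ p = monomial β (1:A)}

variable {A}

/-- Degree-`s` part of the ideal generated by the marked set. -/
noncomputable def IdealDegI (P : Finset (Exp n)) (g : Exp n → MvPolynomial (Fin (n+1)) A)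
    (s : ℕ) : Submodule A (MvPolynomial (Fin (n+1)) A) :=
  (Ideal.span (g '' ↑P)).restrictScalars A ⊓ homogeneousSubmodule (Fin (n+1)) A s

/-- A `P(J)`-marked basis of polynomials: `S_s = (G)_s ⊕ ⟨N(J)_s⟩^A` for all `s`. -/
def IsMarkedBasisI (T : Set (Exp n)) (P : Finset (Exp n))
    (g : Exp n → MvPolynomial (Fin (n+1)) A) : Prop :=
  IsMarkedSetI T P g ∧ ∀ s : ℕ,
    homogeneousSubmodule (Fin (n+1)) A s
      = IdealDegI P g s ⊔ Submodule.span A (NTermsDegI A T s) ∧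
    IdealDegI P g s ⊓ Submodule.span A (NTermsDegI A T s) = ⊥

/-- The polynomial `p` involves only multiplicative variables of `x^α`. -/
def multPoly (α : Exp n) (p : MvPolynomial (Fin (n+1)) A) : Prop :=
  ∀ β ∈ p.support, multExp α β

end IdealDefs

section SyzDefs

variable {A : Type*} [CommRing A]

/-- The map `(c_l) ↦ Σ_l c_l f_{α(l)}` whose kernel is `Syz(G)`. -/
noncomputable def syzMap (P : Finset (Exp n)) (g : Exp n → MvPolynomial (Fin (n+1)) A) :
    (↥P → MvPolynomial (Fin (n+1)) A) →ₗ[MvPolynomial (Fin (n+1)) A]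
      MvPolynomial (Fin (n+1)) A where
  toFun c := ∑ l : ↥P, c l * g l.1
  map_add' c c' := by simp [add_mul, Finset.sum_add_distrib]
  map_smul' a c := by simp [Finset.mul_sum, mul_assoc]

/-- Weight vector for the syzygy module: `d_l = deg x^{α(l)}`. -/
def ddeg (P : Finset (Exp n)) : ↥P → ℤ := fun l => (degE l.1 : ℤ)

/-- Terms of the monomial ideal generated by the nonmultiplicative variables of `x^{α(l)}`. -/
def Jsyz (P : Finset (Exp n)) : ↥P → Set (Exp n) :=
  fun l => {β | ∃ i ∈ β.support, ¬ mult (l : Exp n) i}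

open Classical in
/-- The claimed Pommaret basis `{x_i e_l : x_i nonmultiplicative for x^{α(l)}}`. -/
noncomputable def Psyz (P : Finset (Exp n)) : ↥P → Finset (Exp n) := fun l =>
  (Finset.univ.filter fun i : Fin (n+1) => ¬ mult (l : Exp n) i).image
    fun i => Finsupp.single i 1

open Classical in
/-- The syzygy `S_{k;i} = x_i e_k − Σ_l P_l^{k;i} e_l`. -/
noncomputable def Ssyz (P : Finset (Exp n))
    (Pc : ↥P → Fin (n+1) → ↥P → MvPolynomial (Fin (n+1)) A)
    (k : ↥P) (i : Fin (n+1)) : ↥P → MvPolynomial (Fin (n+1)) A :=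
  fun l => (if l = k then (X i : MvPolynomial (Fin (n+1)) A) else 0) - Pc k i l

/-- The set `G_Syz^(s)`. -/
def GSyzDeg (P : Finset (Exp n))
    (Pc : ↥P → Fin (n+1) → ↥P → MvPolynomial (Fin (n+1)) A) (s : ℤ) :
    Set (↥P → MvPolynomial (Fin (n+1)) A) :=
  {v | ∃ k : ↥P, ∃ i : Fin (n+1), ¬ mult (k : Exp n) i ∧ ∃ δ : Exp n,
    (∀ j ∈ δ.support, j ≤ i) ∧ (degE δ : ℤ) + 1 + ddeg P k = s ∧
    v = (monomial δ (1:A)) • Ssyz P Pc k i}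

end SyzDefs

/-!
Let `x^b` be the lexicographically largest term occurring in any coefficient of the syzygy,
say in `c a`. Since `b` is multiplicative for `a`, the term `x^(a+b)` lies in the Pommaret
cone of `a`; by disjointness of the cones it is the head term of no other product
`c α * x^α`, and a tail contribution `x^β * x^ε` with `ε ∉ J` would force `β` to be
lexicographically larger than `b`. So the coefficient of `x^(a+b)` in `∑ c α * g α` is the
nonzero coefficient of `x^b` in `c a`.
-/

section Lex

-- `lexLt` decides at the largest index where the exponents differ, hence the dual index order.
def lexKey (β : Exp n) : Lex ((Fin (n+1))ᵒᵈ → ℕ) := toLex fun i => β (OrderDual.ofDual i)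

lemma lexLt_iff_lexKey_lt {η δ : Exp n} : lexLt η δ ↔ lexKey η < lexKey δ :=
  ⟨fun ⟨i, hi, habove⟩ => ⟨OrderDual.toDual i, fun _ hj => habove _ hj, hi⟩,
    fun ⟨i, habove, hi⟩ => ⟨OrderDual.ofDual i, hi, fun j hj => habove (OrderDual.toDual j) hj⟩⟩

lemma lexKey_injective : Function.Injective (lexKey (n := n)) := fun _ _ h =>
  Finsupp.ext fun i => congrFun (toLex.injective h) (OrderDual.toDual i)

lemma exists_mem_forall_not_lexLt (s : Finset (Exp n)) (hs : s.Nonempty) :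
    ∃ m ∈ s, ∀ b ∈ s, ¬ lexLt m b := by
  obtain ⟨m, hm, hmax⟩ := s.exists_max_image lexKey hs
  exact ⟨m, hm, fun b hb h => (lexLt_iff_lexKey_lt.1 h).not_ge (hmax b hb)⟩

end Lex

section Pommaret

variable {T : Set (Exp n)} {P : Finset (Exp n)} {α β δ ε : Exp n}

lemma IsMonomialIdeal.mem_of_le (hT : IsMonomialIdeal T) (hα : α ∈ T) (hle : α ≤ ε) : ε ∈ T := by
  simpa only [add_tsub_cancel_of_le hle] using hT α hα (ε - α)

lemma IsPommaretBasis.mem (hP : IsPommaretBasis P T) (hα : α ∈ P) : α ∈ T :=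
  (hP.1 α).2 ⟨α, hα, 0, fun i hi => by simp at hi, (add_zero α).symm⟩

lemma le_of_lexLt_of_add_eq_add (hδ : multExp α δ) (hlt : lexLt β δ) (heq : β + ε = α + δ) :
    α ≤ ε := by
  obtain ⟨i, hi, habove⟩ := hlt
  have hsum (j : Fin (n+1)) : β j + ε j = α j + δ j := by
    simpa only [Finsupp.add_apply] using DFunLike.congr_fun heq j
  have hαi : ∀ j ∈ α.support, i ≤ j := hδ i (Finsupp.mem_support_iff.2 (by omega))
  intro j
  rcases lt_trichotomy j i with hj | rfl | hj
  · have : α j = 0 := Finsupp.notMem_support_iff.1 fun h => (hαi j h).not_gt hj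
    omega
  · have := hsum j
    omega
  · have := hsum j
    have := habove j hj
    omega

lemma lexLt_of_add_eq_add_of_notMem (hT : IsMonomialIdeal T) (hα : α ∈ T) (hδ : multExp α δ)
    (hε : ε ∉ T) (heq : β + ε = α + δ) : lexLt δ β := by
  rcases lt_trichotomy (lexKey δ) (lexKey β) with h | h | h
  · exact lexLt_iff_lexKey_lt.2 h
  · obtain rfl := lexKey_injective h
    obtain rfl : ε = α := add_left_cancel (heq.trans (add_comm α δ))
    exact absurd hα hε
  · exact absurd (hT.mem_of_le hα (le_of_lexLt_of_add_eq_add hδ (lexLt_iff_lexKey_lt.2 h) heq)) hε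

end Pommaret

section Coeff

variable {A : Type*} [CommRing A] {T : Set (Exp n)} {P : Finset (Exp n)} {a b α : Exp n}

lemma coeff_add_mul_eq_zero (hT : IsMonomialIdeal T) (ha : a ∈ T) (hb : multExp a b)
    {p f : MvPolynomial (Fin (n+1)) A} (hf : ∀ ε ∈ f.support, ε ∉ T)
    (hp : ∀ β ∈ p.support, ¬ lexLt b β) : coeff (a + b) (p * f) = 0 := by
  rw [coeff_mul]
  refine Finset.sum_eq_zero fun ⟨β, ε⟩ hβε => ?_
  rw [Finset.HasAntidiagonal.mem_antidiagonal] at hβε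
  by_contra hne
  have hβ : β ∈ p.support := mem_support_iff.2 (left_ne_zero_of_mul hne)
  have hε : ε ∈ f.support := mem_support_iff.2 (right_ne_zero_of_mul hne)
  exact hp β hβ (lexLt_of_add_eq_add_of_notMem hT ha hb (hf ε hε) hβε)

lemma coeff_add_mul_monomial (hP : IsPommaretBasis P T) (hα : α ∈ P) (ha : a ∈ P)
    (hb : multExp a b) {p : MvPolynomial (Fin (n+1)) A} (hp : multPoly α p) :
    coeff (a + b) (p * monomial α 1) = if α = a then coeff b p else 0 := by
  rw [coeff_mul_monomial']
  split_ifs with hle heq heq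
  · subst heq
    rw [add_tsub_cancel_left, mul_one]
  · by_contra hne
    have hsupp : a + b - α ∈ p.support := mem_support_iff.2 (left_ne_zero_of_mul hne)
    exact heq (hP.2 _ α hα a ha ⟨_, hp _ hsupp, (add_tsub_cancel_of_le hle).symm⟩ ⟨b, hb, rfl⟩)
  · exact absurd le_self_add (heq ▸ hle)
  · rfl

lemma coeff_add_sum_mul (hT : IsMonomialIdeal T) (hP : IsPommaretBasis P T)
    {g c : Exp n → MvPolynomial (Fin (n+1)) A} (hg : IsMarkedSetI T P g)
    (hc : ∀ α ∈ P, multPoly α (c α)) (ha : a ∈ P) (hb : multExp a b)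
    (hmax : ∀ α ∈ P, ∀ β ∈ (c α).support, ¬ lexLt b β) :
    coeff (a + b) (∑ α ∈ P, c α * g α) = coeff b (c a) := by
  have hsplit : ∀ α ∈ P, coeff (a + b) (c α * g α) = if α = a then coeff b (c α) else 0 := by
    intro α hα
    rw [← sub_add_cancel (g α) (monomial α 1), mul_add, coeff_add,
      coeff_add_mul_eq_zero hT (hP.mem ha) hb (fun ε hε => (hg α hα ε hε).1) (hmax α hα),
      zero_add, coeff_add_mul_monomial hP hα ha hb (hc α hα)]
  rw [coeff_sum, Finset.sum_congr rfl hsplit, Finset.sum_ite_eq' P a, if_pos ha]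

end Coeff

theorem statement15_general {n : ℕ} {A : Type*} [CommRing A]
    (T : Set (Exp n)) (P : Finset (Exp n))
    (hT : IsMonomialIdeal T) (hP : IsPommaretBasis P T)
    (g : Exp n → MvPolynomial (Fin (n+1)) A) (hG : IsMarkedBasisI T P g)
    (c : Exp n → MvPolynomial (Fin (n+1)) A)
    (hsyz : ∑ α ∈ P, c α * g α = 0) :
    (∀ α ∈ P, multPoly α (c α)) ↔ ∀ α ∈ P, c α = 0 := by
  refine ⟨fun hc => ?_, fun h α hα β hβ => by simp [h α hα] at hβ⟩
  by_contra! ⟨α, hα, hcα⟩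
  obtain ⟨β, hβ⟩ := support_nonempty.2 hcα
  obtain ⟨b, hbB, hbmax⟩ := exists_mem_forall_not_lexLt (P.biUnion fun α => (c α).support)
    ⟨β, Finset.mem_biUnion.2 ⟨α, hα, hβ⟩⟩
  obtain ⟨a, ha, hb⟩ := Finset.mem_biUnion.1 hbB
  have hcoeff := coeff_add_sum_mul hT hP hG.1 hc ha (hc a ha b hb)
    fun α hα β hβ => hbmax β (Finset.mem_biUnion.2 ⟨α, hα, hβ⟩)
  rw [hsyz, coeff_zero] at hcoeff
  exact mem_support_iff.1 hb hcoeff.symm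

/-- Lemma `zerosyz`: a syzygy of a `P(J)`-marked basis all of whose
coefficients involve only multiplicative variables is zero, and conversely. -/
theorem statement15 {n : ℕ} {A : Type*} [CommRing A] [IsNoetherianRing A]
    (T : Set (Exp n)) (P : Finset (Exp n))
    (hT : IsMonomialIdeal T) (hP : IsPommaretBasis P T)
    (g : Exp n → MvPolynomial (Fin (n+1)) A) (hG : IsMarkedBasisI T P g)
    (c : Exp n → MvPolynomial (Fin (n+1)) A)
    (hsyz : ∑ α ∈ P, c α * g α = 0) :
    (∀ α ∈ P, multPoly α (c α)) ↔ ∀ α ∈ P, c α = 0 :=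
  statement15_general T P hT hP g hG c hsyz

end MB
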